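/- arXiv:1507.04631 — 5 statements merged into one kernel-verified Lean document; each statement's English description precedes it below -/
import Mathlib

section
/- For a service process S(s,t) = Σ_{k=s}^{t-1} c_k with non-negative real values c_k, feedback delay d = 1, and window w > 0, the single convolution step satisfies (S ⊗ δ_1 ⊗ δ^{+w} ⊗ S)(s,t) = S(s,t) − max_{s ≤ k < t} c_k + w for all s < t, where δ_1(s,t) = δ(s, t−1) is the unit-delay element and δ^{+w}(s,t) = w for s ≥ t, ∞ otherwise. -/
open scoped ENNReal NNReal

/-- Min-plus convolution of bivariate functions. -/
noncomputable def conv (f g : ℕ → ℕ → ℝ≥0∞) : ℕ → ℕ → ℝ≥0∞ :=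
  fun s t => ⨅ τ ∈ Finset.Icc s t, f s τ + g τ t

/-- The neutral element δ : δ(s,t)=0 if s ≥ t, ∞ otherwise. -/
noncomputable def delta : ℕ → ℕ → ℝ≥0∞ := fun s t => if t ≤ s then 0 else ∞

/-- n-fold self-convolution: f^(0) = δ, f^(n+1) = f^(n) ⊗ f. -/
noncomputable def convPow (f : ℕ → ℕ → ℝ≥0∞) : ℕ → ℕ → ℕ → ℝ≥0∞
  | 0 => delta
  | n + 1 => conv (convPow f n) f

/-- Subadditive subClosure f* = inf over n of f^(n). -/
noncomputable def subClosure (f : ℕ → ℕ → ℝ≥0∞) : ℕ → ℕ → ℝ≥0∞ :=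
  fun s t => ⨅ n : ℕ, convPow f n s t

/-- Delay element: δ_d(s,t) = 0 if s ≥ t − d, ∞ otherwise. -/
noncomputable def deltaD (d : ℕ) : ℕ → ℕ → ℝ≥0∞ := fun s t => if t ≤ s + d then 0 else ∞

/-- Window element: δ^{+w}(s,t) = w if s ≥ t, ∞ otherwise. -/
noncomputable def deltaW (w : ℝ≥0∞) : ℕ → ℕ → ℝ≥0∞ := fun s t => if t ≤ s then w else ∞

open Finset

/-! Convolving with `δ^{+w}` just adds `w`, and convolving with `δ_1` lets the intermediate time
jump over one index. The triple convolution is therefore `w` plus the least value of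
`S(s,τ) + S(u,t)` over `τ ≤ u ≤ τ + 1`, i.e. `S(s,t)` with at most one summand `c_τ` removed;
removing a largest one is optimal. -/

lemma conv_deltaD (f : ℕ → ℕ → ℝ≥0∞) (d s u : ℕ) :
    conv f (deltaD d) s u = ⨅ τ ∈ Icc s u, ⨅ _ : u ≤ τ + d, f s τ := by
  unfold conv deltaD
  congr! 3 with τ
  split_ifs with h <;> simp [h]

lemma conv_deltaW_of_le (f : ℕ → ℕ → ℝ≥0∞) (w : ℝ≥0∞) {s t : ℕ} (hst : s ≤ t) :
    conv f (deltaW w) s t = f s t + w := by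
  refine le_antisymm ?_ (le_iInf₂ fun τ hτ => ?_)
  · calc conv f (deltaW w) s t ≤ f s t + deltaW w t t := iInf₂_le t (mem_Icc.2 ⟨hst, le_rfl⟩)
      _ = f s t + w := by simp [deltaW]
  · obtain rfl | hτt := eq_or_lt_of_le (mem_Icc.1 hτ).2
    · simp [deltaW]
    · simp [deltaW, not_le.2 hτt]

lemma sum_Ico_sub_sup_le_add (a : ℕ → ℝ≥0∞) {s t τ u : ℕ} (hsτ : s ≤ τ) (hu : u ≤ τ + 1) :
    ∑ k ∈ Ico s t, a k - (Ico s t).sup a ≤ ∑ k ∈ Ico s τ, a k + ∑ k ∈ Ico u t, a k := by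
  rcases lt_or_ge τ t with hτt | htτ
  · have hsplit : ∑ k ∈ Ico s t, a k = ∑ k ∈ Ico s τ, a k + a τ + ∑ k ∈ Ico (τ + 1) t, a k := by
      rw [← sum_Ico_consecutive _ hsτ hτt.le, sum_eq_sum_Ico_succ_bot hτt, add_assoc]
    rw [tsub_le_iff_right, hsplit, add_right_comm]
    gcongr
    exact le_sup (mem_Ico.2 ⟨hsτ, hτt⟩)
  · calc ∑ k ∈ Ico s t, a k - (Ico s t).sup a ≤ ∑ k ∈ Ico s t, a k := tsub_le_self
      _ ≤ ∑ k ∈ Ico s τ, a k := sum_le_sum_of_subset (Ico_subset_Ico le_rfl htτ)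
      _ ≤ _ := le_self_add

lemma exists_sum_Ico_sub_sup_eq (c : ℕ → ℝ≥0) {s t : ℕ} (hst : s < t) :
    ∃ k, s ≤ k ∧ k < t ∧ ∑ i ∈ Ico s t, (c i : ℝ≥0∞) - (Ico s t).sup (fun i => (c i : ℝ≥0∞))
      = ∑ i ∈ Ico s k, (c i : ℝ≥0∞) + ∑ i ∈ Ico (k + 1) t, (c i : ℝ≥0∞) := by
  obtain ⟨k, hk, hmax⟩ := exists_mem_eq_sup (Ico s t) (nonempty_Ico.2 hst) fun i => (c i : ℝ≥0∞)
  obtain ⟨hsk, hkt⟩ := mem_Ico.1 hk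
  refine ⟨k, hsk, hkt, ?_⟩
  rw [hmax, ← sum_Ico_consecutive _ hsk hkt.le, sum_eq_sum_Ico_succ_bot hkt, add_left_comm,
    ENNReal.add_sub_cancel_left ENNReal.coe_ne_top]

lemma conv_deltaD_one_deltaW_conv_eq (f g : ℕ → ℕ → ℝ≥0∞) (w : ℝ≥0∞) (s t : ℕ) :
    conv (conv (conv f (deltaD 1)) (deltaW w)) g s t
      = ⨅ u ∈ Icc s t, ⨅ τ ∈ Icc s u, ⨅ _ : u ≤ τ + 1, f s τ + g u t + w := by
  refine iInf_congr fun u => iInf_congr fun hu => ?_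
  simp only [conv_deltaW_of_le _ _ (mem_Icc.1 hu).1, conv_deltaD, ENNReal.iInf_add, add_right_comm]

theorem single_step_unit_delay_general (c : ℕ → ℝ≥0) (w : ℝ≥0∞)
    (S : ℕ → ℕ → ℝ≥0∞) (hS : ∀ s t, S s t = ∑ k ∈ Finset.Ico s t, (c k : ℝ≥0∞)) :
    ∀ s t : ℕ, s < t →
      conv (conv (conv S (deltaD 1)) (deltaW w)) S s t
        = S s t - ((Finset.Ico s t).sup fun k => (c k : ℝ≥0∞)) + w := by
  intro s t hst
  obtain ⟨k, hsk, hkt, hk⟩ := exists_sum_Ico_sub_sup_eq c hst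
  rw [conv_deltaD_one_deltaW_conv_eq]
  simp only [hS] at hk ⊢
  refine le_antisymm ?_ (le_iInf₂ fun u hu => le_iInf₂ fun τ hτ => le_iInf fun hτu => ?_)
  · refine (iInf₂_le (k + 1) (mem_Icc.2 ⟨by omega, hkt⟩)).trans <|
      (iInf₂_le k (mem_Icc.2 ⟨hsk, by omega⟩)).trans <| (iInf_le _ le_rfl).trans_eq ?_
    rw [hk]
  · gcongr
    exact sum_Ico_sub_sup_le_add _ (mem_Icc.1 hτ).1 hτu

/-- single convolution step for additive service, d = 1:
(S ⊗ δ_1 ⊗ δ^{+w} ⊗ S)(s,t) = S(s,t) − max_{s ≤ k < t} c_k + w for s < t. -/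
theorem single_step_unit_delay (c : ℕ → ℝ≥0) (w : ℝ≥0∞) (hw : 0 < w) (hw' : w ≠ ∞)
    (S : ℕ → ℕ → ℝ≥0∞) (hS : ∀ s t, S s t = ∑ k ∈ Finset.Ico s t, (c k : ℝ≥0∞)) :
    ∀ s t : ℕ, s < t →
      conv (conv (conv S (deltaD 1)) (deltaW w)) S s t
        = S s t - ((Finset.Ico s t).sup fun k => (c k : ℝ≥0∞)) + w :=
  single_step_unit_delay_general c w S hS
end

section
/- Exact equivalent service for unit delay: Let S(s,t) = Σ_{k=s}^{t-1} c_k with c_k ≥ 0 arbitrary reals, d = 1 and w > 0. Then the equivalent service process S_win = (S ⊗ δ_1 ⊗ δ^{+w})* ⊗ S satisfies S_win(s,t) = Σ_{k=s}^{t-1} min{c_k, w} for all s ≤ t. -/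
open scoped ENNReal NNReal

lemma conv_le_aux (f g : ℕ → ℕ → ℝ≥0∞) {s t τ : ℕ} (h1 : s ≤ τ) (h2 : τ ≤ t) :
    conv f g s t ≤ f s τ + g τ t :=
  iInf₂_le τ (Finset.mem_Icc.mpr ⟨h1, h2⟩)

lemma le_conv_aux (f g : ℕ → ℕ → ℝ≥0∞) {s t : ℕ} {x : ℝ≥0∞}
    (h : ∀ τ, s ≤ τ → τ ≤ t → x ≤ f s τ + g τ t) : x ≤ conv f g s t :=
  le_iInf₂ fun τ hτ => h τ (Finset.mem_Icc.mp hτ).1 (Finset.mem_Icc.mp hτ).2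

lemma subClosure_le_step (f : ℕ → ℕ → ℝ≥0∞) {s t τ : ℕ} (h1 : s ≤ τ) (h2 : τ ≤ t) :
    subClosure f s t ≤ subClosure f s τ + f τ t := by
  rw [subClosure, subClosure, ENNReal.iInf_add]
  exact le_iInf fun n => le_trans (iInf_le _ (n + 1)) (conv_le_aux _ _ h1 h2)

/-- target sum -/
noncomputable def Mw (c : ℕ → ℝ≥0) (w : ℝ≥0∞) : ℕ → ℕ → ℝ≥0∞ := fun s t => ∑ k ∈ Finset.Ico s t, min (c k : ℝ≥0∞) w

lemma Mw_split (c : ℕ → ℝ≥0) (w : ℝ≥0∞) {s τ t : ℕ} (h1 : s ≤ τ) (h2 : τ ≤ t) :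
    Mw c w s τ + Mw c w τ t = Mw c w s t :=
  Finset.sum_Ico_consecutive _ h1 h2

lemma Mw_le_S (c : ℕ → ℝ≥0) (w : ℝ≥0∞) (S : ℕ → ℕ → ℝ≥0∞)
    (hS : ∀ s t, S s t = ∑ k ∈ Finset.Ico s t, (c k : ℝ≥0∞)) (s t : ℕ) : Mw c w s t ≤ S s t := by
  rw [hS]; exact Finset.sum_le_sum fun k _ => min_le_left _ _

lemma Mw_zero (c : ℕ → ℝ≥0) (w : ℝ≥0∞) {s t : ℕ} (h : t ≤ s) : Mw c w s t = 0 := by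
  unfold Mw
  rw [Finset.Ico_eq_empty (by omega : ¬ s < t), Finset.sum_empty]

lemma fLB (c : ℕ → ℝ≥0) (w : ℝ≥0∞) (S : ℕ → ℕ → ℝ≥0∞)
    (hS : ∀ s t, S s t = ∑ k ∈ Finset.Ico s t, (c k : ℝ≥0∞)) (s t : ℕ) : Mw c w s t ≤ conv (conv S (deltaD 1)) (deltaW w) s t := by
  rcases le_or_gt t s with h | h
  · rw [Mw_zero c w h]; exact zero_le
  · obtain ⟨u, rfl⟩ : ∃ u, t = u + 1 := ⟨t - 1, by omega⟩
    apply le_conv_aux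
    intro τ hsτ hτt
    by_cases hw : u + 1 ≤ τ
    · rw [deltaW, if_pos hw]
      have hconv : Mw c w s u ≤ conv S (deltaD 1) s τ := by
        apply le_conv_aux
        intro σ hsσ hστ
        by_cases hd : τ ≤ σ + 1
        · rw [deltaD, if_pos hd, add_zero]
          have huσ : u ≤ σ := by omega
          calc Mw c w s u ≤ S s u := Mw_le_S c w S hS s u
            _ ≤ S s σ := by
                rw [hS, hS]
                exact Finset.sum_le_sum_of_subset (Finset.Ico_subset_Ico_right huσ)
        · rw [deltaD, if_neg hd]; simp
      calc Mw c w s (u + 1) = Mw c w s u + Mw c w u (u + 1) :=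
            (Mw_split c w (by omega) (by omega)).symm
        _ ≤ conv S (deltaD 1) s τ + w := by
            apply add_le_add hconv
            have : Mw c w u (u + 1) = min (c u : ℝ≥0∞) w := by
              unfold Mw; rw [Finset.sum_Ico_succ_top le_rfl, Finset.Ico_self,
                Finset.sum_empty, zero_add]
            rw [this]; exact min_le_right _ _
    · rw [deltaW, if_neg hw]; simp

lemma fUB (w : ℝ≥0∞) (S : ℕ → ℕ → ℝ≥0∞) {s u : ℕ} (h : s ≤ u) :
    conv (conv S (deltaD 1)) (deltaW w) s (u + 1) ≤ S s u + w := by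
  have h1 : conv (conv S (deltaD 1)) (deltaW w) s (u + 1)
      ≤ conv S (deltaD 1) s (u + 1) + deltaW w (u + 1) (u + 1) :=
    conv_le_aux _ _ (by omega) le_rfl
  have h2 : conv S (deltaD 1) s (u + 1) ≤ S s u + deltaD 1 u (u + 1) :=
    conv_le_aux _ _ h (by omega)
  have h3 : deltaD 1 u (u + 1) = 0 := by rw [deltaD, if_pos le_rfl]
  have h4 : deltaW w (u + 1) (u + 1) = w := by rw [deltaW, if_pos le_rfl]
  calc conv (conv S (deltaD 1)) (deltaW w) s (u + 1)
      ≤ conv S (deltaD 1) s (u + 1) + deltaW w (u + 1) (u + 1) := h1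
    _ ≤ S s u + deltaD 1 u (u + 1) + deltaW w (u + 1) (u + 1) := add_le_add h2 le_rfl
    _ = S s u + w := by rw [h3, h4, add_zero]

lemma gLBn (c : ℕ → ℝ≥0) (w : ℝ≥0∞) (S : ℕ → ℕ → ℝ≥0∞)
    (hS : ∀ s t, S s t = ∑ k ∈ Finset.Ico s t, (c k : ℝ≥0∞)) (n : ℕ) : ∀ s t : ℕ, Mw c w s t ≤ convPow (conv (conv S (deltaD 1)) (deltaW w)) n s t := by
  induction n with
  | zero =>
    intro s t
    rcases le_or_gt t s with h | h
    · rw [Mw_zero c w h]; exact zero_le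
    · show Mw c w s t ≤ delta s t
      rw [delta, if_neg (by omega)]; simp
  | succ n ih =>
    intro s t
    apply le_conv_aux
    intro τ h1 h2
    calc Mw c w s t = Mw c w s τ + Mw c w τ t := (Mw_split c w h1 h2).symm
      _ ≤ _ := add_le_add (ih s τ) (fLB c w S hS τ t)

lemma gUB (c : ℕ → ℝ≥0) (w : ℝ≥0∞) (S : ℕ → ℕ → ℝ≥0∞)
    (hS : ∀ s t, S s t = ∑ k ∈ Finset.Ico s t, (c k : ℝ≥0∞)) : ∀ u : ℕ, ∀ s : ℕ, s ≤ u →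
    subClosure (conv (conv S (deltaD 1)) (deltaW w)) s (u + 1) ≤ Mw c w s u + w := by
  intro u
  induction u using Nat.strong_induction_on with
  | _ u ih =>
    intro s hsu
    set f := conv (conv S (deltaD 1)) (deltaW w) with hf
    set T := (Finset.Ico s u).filter (fun k => w < (c k : ℝ≥0∞)) with hT
    by_cases hne : T.Nonempty
    · set a := T.max' hne with ha
      have haT : a ∈ T := T.max'_mem hne
      have haIco : a ∈ Finset.Ico s u := (Finset.mem_filter.mp haT).1
      have hwa : w < (c a : ℝ≥0∞) := (Finset.mem_filter.mp haT).2
      have hsa : s ≤ a := (Finset.mem_Ico.mp haIco).1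
      have hau : a < u := (Finset.mem_Ico.mp haIco).2
      have hmax : ∀ k ∈ Finset.Ico (a + 1) u, (c k : ℝ≥0∞) ≤ w := by
        intro k hk
        by_contra hc
        have hk1 := (Finset.mem_Ico.mp hk).1
        have : k ∈ T := Finset.mem_filter.mpr
          ⟨Finset.mem_Ico.mpr ⟨by omega, (Finset.mem_Ico.mp hk).2⟩, lt_of_not_ge hc⟩
        have := T.le_max' k this
        have := (Finset.mem_Ico.mp hk).1
        omega
      have step : subClosure f s (u + 1) ≤ subClosure f s (a + 1) + f (a + 1) (u + 1) :=
        subClosure_le_step f (by omega) (by omega)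
      have ih1 : subClosure f s (a + 1) ≤ Mw c w s a + w := ih a hau s hsa
      have ih2 : f (a + 1) (u + 1) ≤ S (a + 1) u + w := fUB w S (by omega : a + 1 ≤ u)
      have hSeq : S (a + 1) u = Mw c w (a + 1) u := by
        rw [hS]
        exact (Finset.sum_congr rfl fun k hk => (min_eq_left (hmax k hk)).symm)
      calc subClosure f s (u + 1) ≤ (Mw c w s a + w) + (S (a + 1) u + w) :=
            le_trans step (add_le_add ih1 ih2)
        _ = (Mw c w s a + min (c a : ℝ≥0∞) w) + Mw c w (a + 1) u + w := by
            rw [hSeq, min_eq_right hwa.le]; ring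
        _ = Mw c w s (a + 1) + Mw c w (a + 1) u + w := by
            congr 1
            have : Mw c w a (a + 1) = min (c a : ℝ≥0∞) w := by
              unfold Mw; rw [Finset.sum_Ico_succ_top le_rfl, Finset.Ico_self,
                Finset.sum_empty, zero_add]
            rw [← Mw_split c w hsa (by omega : a ≤ a + 1), this]
        _ = Mw c w s u + w := by rw [Mw_split c w (by omega) (by omega)]
    · have hall : ∀ k ∈ Finset.Ico s u, (c k : ℝ≥0∞) ≤ w := by
        intro k hk
        by_contra hc
        exact hne ⟨k, Finset.mem_filter.mpr ⟨hk, lt_of_not_ge hc⟩⟩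
      have hSeq : S s u = Mw c w s u := by
        rw [hS]
        exact (Finset.sum_congr rfl fun k hk => (min_eq_left (hall k hk)).symm)
      have h1 : subClosure f s (u + 1) ≤ convPow f 1 s (u + 1) := iInf_le _ 1
      have h2 : convPow f 1 s (u + 1) ≤ delta s s + f s (u + 1) :=
        conv_le_aux _ _ le_rfl (by omega)
      have h3 : delta s s = 0 := by rw [delta, if_pos le_rfl]
      calc subClosure f s (u + 1) ≤ delta s s + f s (u + 1) := le_trans h1 h2
        _ = f s (u + 1) := by rw [h3, zero_add]
        _ ≤ S s u + w := fUB w S hsu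
        _ = Mw c w s u + w := by rw [hSeq]


/-- exact equivalent service for unit feedback delay:
S_win(s,t) = Σ_{k=s}^{t-1} min{c_k, w}. -/
theorem equivalent_service_unit_delay (c : ℕ → ℝ≥0) (w : ℝ≥0∞) (hw : 0 < w) (hw' : w ≠ ∞)
    (S : ℕ → ℕ → ℝ≥0∞) (hS : ∀ s t, S s t = ∑ k ∈ Finset.Ico s t, (c k : ℝ≥0∞)) :
    ∀ s t : ℕ, s ≤ t →
      conv (subClosure (conv (conv S (deltaD 1)) (deltaW w))) S s t
        = ∑ k ∈ Finset.Ico s t, min (c k : ℝ≥0∞) w := by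
  intro s t hst
  set f := conv (conv S (deltaD 1)) (deltaW w) with hf
  have key : conv (subClosure f) S s t = Mw c w s t := by
    apply le_antisymm
    · -- upper bound
      set T := (Finset.Ico s t).filter (fun k => w < (c k : ℝ≥0∞)) with hT
      by_cases hne : T.Nonempty
      · set a := T.max' hne with ha
        have haT : a ∈ T := T.max'_mem hne
        have haIco : a ∈ Finset.Ico s t := (Finset.mem_filter.mp haT).1
        have hwa : w < (c a : ℝ≥0∞) := (Finset.mem_filter.mp haT).2
        have hsa : s ≤ a := (Finset.mem_Ico.mp haIco).1
        have hat : a < t := (Finset.mem_Ico.mp haIco).2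
        have hmax : ∀ k ∈ Finset.Ico (a + 1) t, (c k : ℝ≥0∞) ≤ w := by
          intro k hk
          by_contra hc
          have hk1 := (Finset.mem_Ico.mp hk).1
          have : k ∈ T := Finset.mem_filter.mpr
            ⟨Finset.mem_Ico.mpr ⟨by omega, (Finset.mem_Ico.mp hk).2⟩, lt_of_not_ge hc⟩
          have := T.le_max' k this
          have := (Finset.mem_Ico.mp hk).1
          omega
        have h1 : conv (subClosure f) S s t ≤ subClosure f s (a + 1) + S (a + 1) t :=
          conv_le_aux _ _ (by omega) (by omega)
        have h2 : subClosure f s (a + 1) ≤ Mw c w s a + w := gUB c w S hS a s hsa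
        have hSeq : S (a + 1) t = Mw c w (a + 1) t := by
          rw [hS]
          exact (Finset.sum_congr rfl fun k hk => (min_eq_left (hmax k hk)).symm)
        calc conv (subClosure f) S s t ≤ (Mw c w s a + w) + Mw c w (a + 1) t :=
              le_trans h1 (add_le_add h2 (le_of_eq hSeq))
          _ = (Mw c w s a + Mw c w a (a + 1)) + Mw c w (a + 1) t := by
              have : Mw c w a (a + 1) = min (c a : ℝ≥0∞) w := by
                unfold Mw; rw [Finset.sum_Ico_succ_top le_rfl, Finset.Ico_self,
                  Finset.sum_empty, zero_add]
              rw [this, min_eq_right hwa.le]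
          _ = Mw c w s t := by
              rw [Mw_split c w hsa (by omega : a ≤ a + 1),
                Mw_split c w (by omega) (by omega)]
      · have hall : ∀ k ∈ Finset.Ico s t, (c k : ℝ≥0∞) ≤ w := by
          intro k hk
          by_contra hc
          exact hne ⟨k, Finset.mem_filter.mpr ⟨hk, lt_of_not_ge hc⟩⟩
        have hSeq : S s t = Mw c w s t := by
          rw [hS]
          exact (Finset.sum_congr rfl fun k hk => (min_eq_left (hall k hk)).symm)
        have h1 : conv (subClosure f) S s t ≤ subClosure f s s + S s t :=
          conv_le_aux _ _ le_rfl hst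
        have h2 : subClosure f s s ≤ 0 := by
          refine le_trans (iInf_le _ 0) ?_
          show delta s s ≤ 0
          rw [delta, if_pos le_rfl]
        calc conv (subClosure f) S s t ≤ subClosure f s s + S s t := h1
          _ ≤ 0 + Mw c w s t := add_le_add h2 (le_of_eq hSeq)
          _ = Mw c w s t := zero_add _
    · -- lower bound
      apply le_conv_aux
      intro τ h1 h2
      have hg : Mw c w s τ ≤ subClosure f s τ :=
        le_iInf fun n => gLBn c w S hS n s τ
      calc Mw c w s t = Mw c w s τ + Mw c w τ t := (Mw_split c w h1 h2).symm
        _ ≤ subClosure f s τ + S τ t := add_le_add hg (Mw_le_S c w S hS τ t)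
  rw [key]; rfl
end

section
/- A priori sandwich bounds: Let S be a causal bivariate function (S(t,t) = 0, non-decreasing in second argument), d > 0 an integer, w > 0 real, and S_win = (S ⊗ δ_d ⊗ δ^{+w})* ⊗ S. Let S' be the corresponding equivalent service process with parameters d' = 1 and w' = w/d. Then for all 0 ≤ s ≤ t: S'(s,t) ≤ S_win(s,t) ≤ min{ S(s,t), ⌈(t−s)/d⌉ · w }. -/
/-!
A step of the window element `S ⊗ δ_d ⊗ δ^{+w}` that advances time by at most `d` costs
exactly `w`, because `S t t = 0`; covering `[s, t]` by `⌈(t - s)/d⌉` such steps gives the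
bound `⌈(t - s)/d⌉ · w`, and the empty path gives `S_win ≤ S`. For the lower bound, a
`(d, w)` step from `s` to `t` costs at least `S(s, t - d) + w`, and `d` steps of the
`(1, w/d)` window match it: for `t ≤ s + d` they cost `d · w/d = w` in total, otherwise one
step to `t - d + 1` costs `S(s, t - d) + w/d` and the `d - 1` remaining unit steps cost `w/d`
each. So the `d`-fold power of the fine window lies below the coarse window, and their
closures compare in the same way.
-/

open scoped ENNReal NNReal

section MinPlus

variable {f g : ℕ → ℕ → ℝ≥0∞}

lemma conv_le_add (f g : ℕ → ℕ → ℝ≥0∞) {s τ t : ℕ} (hsτ : s ≤ τ) (hτt : τ ≤ t) :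
    conv f g s t ≤ f s τ + g τ t :=
  iInf₂_le τ (Finset.mem_Icc.mpr ⟨hsτ, hτt⟩)

lemma le_conv {s t : ℕ} {x : ℝ≥0∞} (h : ∀ τ, s ≤ τ → τ ≤ t → x ≤ f s τ + g τ t) :
    x ≤ conv f g s t :=
  le_iInf₂ fun τ hτ => h τ (Finset.mem_Icc.mp hτ).1 (Finset.mem_Icc.mp hτ).2

lemma conv_mono_left {f' : ℕ → ℕ → ℝ≥0∞} (h : ∀ s t, s ≤ t → f s t ≤ f' s t) {s t : ℕ} :
    conv f g s t ≤ conv f' g s t :=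
  le_conv fun _ hsτ hτt => (conv_le_add f g hsτ hτt).trans (add_le_add_left (h _ _ hsτ) _)

lemma convPow_one_le (f : ℕ → ℕ → ℝ≥0∞) {s t : ℕ} (hst : s ≤ t) : convPow f 1 s t ≤ f s t :=
  calc convPow f 1 s t ≤ delta s s + f s t := conv_le_add _ _ le_rfl hst
    _ = f s t := by simp [delta]

lemma convPow_add_le (f : ℕ → ℕ → ℝ≥0∞) (a b : ℕ) {s τ t : ℕ} (hsτ : s ≤ τ) (hτt : τ ≤ t) :
    convPow f (a + b) s t ≤ convPow f a s τ + convPow f b τ t := by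
  induction b generalizing t with
  | zero =>
    rcases hτt.eq_or_lt with rfl | hlt
    · simp [convPow, delta]
    · simp [convPow, delta, hlt.not_ge]
  | succ b ih =>
    show conv (convPow f (a + b)) f s t ≤ convPow f a s τ + conv (convPow f b) f τ t
    simp only [conv, ENNReal.add_iInf]
    refine le_iInf₂ fun σ hσ => ?_
    obtain ⟨hτσ, hσt⟩ := Finset.mem_Icc.mp hσ
    calc conv (convPow f (a + b)) f s t ≤ convPow f (a + b) s σ + f σ t :=
          conv_le_add _ _ (hsτ.trans hτσ) hσt
      _ ≤ convPow f a s τ + convPow f b τ σ + f σ t := add_le_add_left (ih hτσ) _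
      _ = _ := add_assoc _ _ _

lemma subClosure_le_convPow (f : ℕ → ℕ → ℝ≥0∞) (n s t : ℕ) :
    subClosure f s t ≤ convPow f n s t :=
  iInf_le _ n

lemma subClosure_le_add_convPow (f : ℕ → ℕ → ℝ≥0∞) (k : ℕ) {s τ t : ℕ} (hsτ : s ≤ τ)
    (hτt : τ ≤ t) : subClosure f s t ≤ subClosure f s τ + convPow f k τ t := by
  simp only [subClosure, ENNReal.iInf_add]
  exact le_iInf fun m =>
    (subClosure_le_convPow f (m + k) s t).trans (convPow_add_le f m k hsτ hτt)

lemma subClosure_le_subClosure {k : ℕ} (h : ∀ s t, s ≤ t → convPow f k s t ≤ g s t) (s t : ℕ) :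
    subClosure f s t ≤ subClosure g s t := by
  refine le_iInf fun n => ?_
  induction n generalizing t with
  | zero => exact subClosure_le_convPow f 0 s t
  | succ n ih =>
    exact le_conv fun τ hsτ hτt =>
      (subClosure_le_add_convPow f k hsτ hτt).trans (add_le_add (ih τ) (h τ t hτt))

lemma conv_subClosure_le_right (f S : ℕ → ℕ → ℝ≥0∞) {s t : ℕ} (hst : s ≤ t) :
    conv (subClosure f) S s t ≤ S s t :=
  calc conv (subClosure f) S s t ≤ subClosure f s s + S s t := conv_le_add _ _ le_rfl hst
    _ ≤ delta s s + S s t := add_le_add_left (subClosure_le_convPow f 0 s s) _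
    _ = S s t := by simp [delta]

lemma conv_le_left_of_causal (f : ℕ → ℕ → ℝ≥0∞) {S : ℕ → ℕ → ℝ≥0∞}
    (hScausal : ∀ t, S t t = 0) {s t : ℕ} (hst : s ≤ t) : conv f S s t ≤ f s t :=
  (conv_le_add f S hst le_rfl).trans_eq (by rw [hScausal, add_zero])

end MinPlus

section Window

noncomputable def windowStep (S : ℕ → ℕ → ℝ≥0∞) (d : ℕ) (w : ℝ≥0∞) : ℕ → ℕ → ℝ≥0∞ :=
  conv (conv S (deltaD d)) (deltaW w)

variable {S : ℕ → ℕ → ℝ≥0∞} {d : ℕ} {w : ℝ≥0∞}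

lemma windowStep_le_of_le_add (hScausal : ∀ t, S t t = 0) {s u : ℕ} (hsu : s ≤ u)
    (hus : u ≤ s + d) : windowStep S d w s u ≤ w :=
  calc windowStep S d w s u ≤ S s s + deltaD d s u + deltaW w u u :=
        (conv_le_add _ _ hsu le_rfl).trans (add_le_add_left (conv_le_add _ _ le_rfl hsu) _)
    _ = w := by simp [hScausal, deltaD, deltaW, hus]

lemma windowStep_le_add {s u : ℕ} (hsu : s + d ≤ u) :
    windowStep S d w s u ≤ S s (u - d) + w :=
  calc windowStep S d w s u ≤ S s (u - d) + deltaD d (u - d) u + deltaW w u u :=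
        (conv_le_add _ _ (by omega) le_rfl).trans
          (add_le_add_left (conv_le_add _ _ (by omega) (by omega)) _)
    _ = S s (u - d) + w := by simp [deltaD, deltaW, Nat.sub_add_cancel (show d ≤ u by omega)]

lemma add_le_windowStep (hS : ∀ s, Monotone (S s)) (s t : ℕ) :
    S s (t - d) + w ≤ windowStep S d w s t := by
  refine le_conv fun σ _ hσt => ?_
  rcases hσt.eq_or_lt with rfl | hσt
  · refine add_le_add (le_conv fun ρ _ _ => ?_) (by simp [deltaW])
    by_cases hρ : σ ≤ ρ + d
    · simpa [deltaD, hρ] using hS s (by omega)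
    · simp [deltaD, hρ]
  · simp [deltaW, hσt.not_ge]

lemma convPow_windowStep_le (hScausal : ∀ t, S t t = 0) (k : ℕ) {s u : ℕ} (hsu : s ≤ u)
    (hus : u ≤ s + k * d) : convPow (windowStep S d w) k s u ≤ k * w := by
  induction k generalizing u with
  | zero => simp [convPow, delta, show u ≤ s by omega]
  | succ k ih =>
    calc convPow (windowStep S d w) (k + 1) s u
        ≤ convPow (windowStep S d w) k s (min u (s + k * d))
            + windowStep S d w (min u (s + k * d)) u := conv_le_add _ _ (by omega) (by omega)
      _ ≤ k * w + w :=
          add_le_add (ih (by omega) (min_le_right _ _))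
            (windowStep_le_of_le_add hScausal (by omega) (by rw [add_mul] at hus; omega))
      _ = (k + 1 : ℕ) * w := by push_cast; ring

lemma convPow_windowStep_one_le (hS : ∀ s, Monotone (S s)) (hScausal : ∀ t, S t t = 0)
    (hd : 0 < d) {w' : ℝ≥0∞} (hw : d * w' = w) {s t : ℕ} (hst : s ≤ t) :
    convPow (windowStep S 1 w') d s t ≤ windowStep S d w s t := by
  refine le_trans ?_ (add_le_windowStep hS s t)
  by_cases hshort : t ≤ s + d
  · calc convPow (windowStep S 1 w') d s t ≤ d * w' :=
          convPow_windowStep_le hScausal d hst (by simpa using hshort)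
      _ = w := hw
      _ ≤ S s (t - d) + w := le_add_self
  · have hsplit := convPow_add_le (windowStep S 1 w') 1 (d - 1)
      (show s ≤ t - d + 1 by omega) (show t - d + 1 ≤ t by omega)
    rw [Nat.add_sub_cancel' hd] at hsplit
    calc convPow (windowStep S 1 w') d s t
        ≤ windowStep S 1 w' s (t - d + 1) + (d - 1 : ℕ) * w' :=
          hsplit.trans (add_le_add (convPow_one_le _ (by omega))
            (convPow_windowStep_le hScausal _ (by omega) (by rw [mul_one]; omega)))
      _ ≤ S s (t - d) + w' + (d - 1 : ℕ) * w' :=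
          add_le_add_left (windowStep_le_add (by omega)) _
      _ = S s (t - d) + w := by
          rw [← hw, add_assoc, ← one_add_mul, ← Nat.cast_one, ← Nat.cast_add,
            Nat.add_sub_cancel' hd]

end Window

lemma natCast_mul_coe_div_natCast {d : ℕ} (hd : d ≠ 0) (w : ℝ≥0) :
    (d : ℝ≥0∞) * ((w / (d : ℝ≥0) : ℝ≥0) : ℝ≥0∞) = w := by
  rw [← ENNReal.coe_natCast, ← ENNReal.coe_mul, mul_div_cancel₀ _ (by exact_mod_cast hd)]

lemma le_ceil_div_mul (m : ℕ) {d : ℕ} (hd : 0 < d) : m ≤ (m + d - 1) / d * d := by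
  have := Nat.lt_div_mul_add (a := m + d - 1) hd
  omega

theorem apriori_sandwich_general (S : ℕ → ℕ → ℝ≥0∞) (hS : ∀ s, Monotone (S s))
    (hScausal : ∀ t, S t t = 0) (d : ℕ) (hd : 0 < d) (w : ℝ≥0) :
    ∀ s t : ℕ, s ≤ t →
      conv (subClosure (conv (conv S (deltaD 1)) (deltaW ((w / (d : ℝ≥0) : ℝ≥0) : ℝ≥0∞)))) S s t
        ≤ conv (subClosure (conv (conv S (deltaD d)) (deltaW (w : ℝ≥0∞)))) S s t ∧
      conv (subClosure (conv (conv S (deltaD d)) (deltaW (w : ℝ≥0∞)))) S s t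
        ≤ min (S s t) (((t - s + d - 1) / d : ℕ) * (w : ℝ≥0∞)) := by
  intro s t hst
  have hrefine : ∀ s t, s ≤ t →
      convPow (windowStep S 1 ((w / (d : ℝ≥0) : ℝ≥0) : ℝ≥0∞)) d s t ≤ windowStep S d w s t :=
    fun _ _ => convPow_windowStep_one_le hS hScausal hd
      (natCast_mul_coe_div_natCast hd.ne' w)
  have hcover : t ≤ s + (t - s + d - 1) / d * d := by
    have := le_ceil_div_mul (t - s) hd
    omega
  refine ⟨conv_mono_left fun s t _ => subClosure_le_subClosure hrefine s t,
    le_min (conv_subClosure_le_right _ _ hst) ?_⟩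
  calc conv (subClosure (windowStep S d w)) S s t ≤ subClosure (windowStep S d w) s t :=
        conv_le_left_of_causal _ hScausal hst
    _ ≤ convPow (windowStep S d w) ((t - s + d - 1) / d) s t := subClosure_le_convPow _ _ s t
    _ ≤ _ := convPow_windowStep_le hScausal _ hst hcover

/-- a priori sandwich bounds on the equivalent service process
S_win = (S ⊗ δ_d ⊗ δ^{+w})* ⊗ S: with S' the equivalent service process for
d' = 1 and w' = w/d, S' ≤ S_win ≤ min{S, ⌈(t−s)/d⌉ w}. -/
theorem apriori_sandwich (S : ℕ → ℕ → ℝ≥0∞) (hS : ∀ s, Monotone (S s))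
    (hScausal : ∀ t, S t t = 0) (d : ℕ) (hd : 0 < d) (w : ℝ≥0) (hw : 0 < w) :
    ∀ s t : ℕ, s ≤ t →
      conv (subClosure (conv (conv S (deltaD 1)) (deltaW ((w / (d : ℝ≥0) : ℝ≥0) : ℝ≥0∞)))) S s t
        ≤ conv (subClosure (conv (conv S (deltaD d)) (deltaW (w : ℝ≥0∞)))) S s t ∧
      conv (subClosure (conv (conv S (deltaD d)) (deltaW (w : ℝ≥0∞)))) S s t
        ≤ min (S s t) (((t - s + d - 1) / d : ℕ) * (w : ℝ≥0∞)) :=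
  apriori_sandwich_general S hS hScausal d hd w
end

section
/- Gap monotonicity of MMOO moment-generating function: Let S(s,t) = P · Σ_{k=s}^{t-1} X_k where (X_k) is a stationary two-state Markov chain with p_{01} + p_{10} < 1 and P > 0. Then for every θ ∈ ℝ and every strictly increasing sequence τ_1 < … < τ_n of integers, E[ e^{θ P Σ_{i=1}^n X_{τ_i}} ] ≤ E[ e^{θ S(0,n)} ]; i.e., the MGF evaluated over any n time slots is maximized when the slots are consecutive. -/
/-!
With `D = diag(1, e^{θP})` and `Q` the transition matrix, the Markov property turns the MGF over
the slots `τ₀ < ⋯ < τ_{n-1}` into `π D Q^{a₁} D ⋯ Q^{a_{n-1}} D 1` with gaps `aᵢ = τᵢ - τᵢ₋₁ ≥ 1`;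
stationarity absorbs the initial `Q^{τ₀}`. For two states `Q^a = Π + λ^a (1 - Π)` with
`λ = 1 - p₀₁ - p₁₀ ∈ [0, 1)`, so the product is affine in each `λ^{aᵢ}`. Its coefficient is
`(v₁ - v₀)((1 - p) w₁ - p w₀)` for the column vector `v` to the right and the row vector `w` to the
left of that factor, and both brackets are `e^{θP} - 1` times a nonnegative number. Hence the
coefficient is nonnegative, and lowering every gap to `1`, i.e. raising `λ^{aᵢ}` to `λ`, can only
increase the MGF.
-/

open MeasureTheory Finset Matrix

namespace Matrix

variable {n R : Type*} [Fintype n] [CommSemiring R]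

/-- The vector `D h₀ M D h₁ M ⋯ M D h_T 1`, with `D` the diagonal matrix of a weight. -/
def weightedPathSum (M : Matrix n n R) (h : ℕ → n → R) : ℕ → n → R
  | 0 => h 0
  | T + 1 => h 0 * (M *ᵥ weightedPathSum M (fun k => h (k + 1)) T)

theorem sum_paths_eq_dotProduct_weightedPathSum (M : Matrix n n R) (T : ℕ) (u : n → R)
    (h : ℕ → n → R) :
    ∑ f : Fin (T + 1) → n, u (f 0) * (∏ k : Fin T, M (f k.castSucc) (f k.succ)) *
      ∏ k : Fin (T + 1), h k (f k) = u ⬝ᵥ weightedPathSum M h T := by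
  induction T generalizing u h with
  | zero =>
    rw [← (Equiv.funUnique (Fin 1) n).symm.sum_comp]
    simp [weightedPathSum, dotProduct]
  | succ T ih =>
    have hdot : u ⬝ᵥ (h 0 * (M *ᵥ weightedPathSum M (fun k => h (k + 1)) T)) =
        ((u * h 0) ᵥ* M) ⬝ᵥ weightedPathSum M (fun k => h (k + 1)) T := by
      rw [← dotProduct_mulVec]; simp only [dotProduct, Pi.mul_apply, mul_assoc]
    rw [← (Fin.consEquiv fun _ => n).sum_comp, Fintype.sum_prod_type, Finset.sum_comm,
      weightedPathSum, hdot, ← ih]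
    refine Finset.sum_congr rfl fun f _ => ?_
    simp only [Fin.consEquiv_apply, Fin.prod_univ_succ (n := T), Fin.prod_univ_succ (n := T + 1),
      Fin.cons_zero, Fin.cons_succ, Fin.castSucc_zero, ← Fin.succ_castSucc, vecMul, dotProduct,
      Finset.sum_mul, Pi.mul_apply, Fin.val_succ, Fin.val_zero]
    refine Finset.sum_congr rfl fun b _ => ?_
    ring

variable [DecidableEq n]

theorem weightedPathSum_add_of_eq_one (M : Matrix n n R) (a : ℕ) (h : ℕ → n → R) (T : ℕ)
    (h1 : ∀ k < a, h k = 1) :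
    weightedPathSum M h (a + T) = M ^ a *ᵥ weightedPathSum M (fun k => h (k + a)) T := by
  induction a generalizing h with
  | zero => simp
  | succ a ih =>
    rw [show a + 1 + T = a + T + 1 by omega, weightedPathSum, h1 0 (by omega), one_mul,
      ih _ fun k hk => h1 (k + 1) (by omega), mulVec_mulVec, ← pow_succ']
    simp only [add_assoc]

theorem weightedPathSum_add_of_pos (M : Matrix n n R) {a : ℕ} (ha : 0 < a)
    (h : ℕ → n → R) (T : ℕ) (h1 : ∀ k, 0 < k → k < a → h k = 1) :
    weightedPathSum M h (a + T) = h 0 * (M ^ a *ᵥ weightedPathSum M (fun k => h (k + a)) T) := by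
  obtain ⟨b, rfl⟩ := Nat.exists_eq_add_of_lt ha
  rw [show 0 + b + 1 + T = b + T + 1 by omega, weightedPathSum,
    weightedPathSum_add_of_eq_one M b _ T fun k hk => h1 (k + 1) (by omega) (by omega),
    mulVec_mulVec, ← pow_succ']
  simp only [zero_add, add_assoc]

/-- The vector `D g M^{a₁} D g M^{a₂} ⋯ M^{a_m} D g 1` for the gap list `[a₁, …, a_m]`. -/
def gapVec (M : Matrix n n R) (g : n → R) : List ℕ → n → R
  | [] => g
  | a :: L => g * (M ^ a *ᵥ gapVec M g L)

theorem dotProduct_gapVec_cons (M : Matrix n n R) (g w : n → R) (a : ℕ) (L : List ℕ) :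
    w ⬝ᵥ gapVec M g (a :: L) = (w * g) ⬝ᵥ (M ^ a *ᵥ gapVec M g L) := by
  simp only [gapVec, dotProduct, Pi.mul_apply, mul_assoc]

end Matrix

namespace MarkovChain

def gaps (σ : ℕ → ℕ) : ℕ → List ℕ
  | 0 => []
  | m + 1 => (σ 1 - σ 0) :: gaps (fun i => σ (i + 1)) m

theorem length_gaps (σ : ℕ → ℕ) (m : ℕ) : (gaps σ m).length = m := by
  induction m generalizing σ with
  | zero => rfl
  | succ m ih => simp [gaps, ih]

theorem one_le_of_mem_gaps {σ : ℕ → ℕ} (hσ : StrictMono σ) {m a : ℕ} (ha : a ∈ gaps σ m) :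
    1 ≤ a := by
  induction m generalizing σ with
  | zero => simp [gaps] at ha
  | succ m ih =>
    rcases List.mem_cons.1 ha with rfl | ha
    · have := hσ Nat.zero_lt_one; omega
    · exact ih (hσ.comp (strictMono_id.add_const 1)) ha

theorem gaps_add_const (c m : ℕ) : gaps (· + c) m = List.replicate m 1 := by
  induction m generalizing c with
  | zero => rfl
  | succ m ih =>
    have hshift : (fun i => i + 1 + c) = (· + (c + 1)) := by funext i; omega
    simp only [gaps, List.replicate_succ, hshift, ih]
    congr 1
    omega

theorem gaps_id (m : ℕ) : gaps (fun i => i) m = List.replicate m 1 := gaps_add_const 0 m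

theorem mem_image_range_succ_iff (σ : ℕ → ℕ) (m : ℕ) {k : ℕ} (hk : σ 0 < k) :
    k ∈ (range (m + 2)).image σ ↔ k ∈ (range (m + 1)).image fun i => σ (i + 1) := by
  simp only [mem_image, mem_range]
  constructor
  · rintro ⟨_ | i, hi, rfl⟩
    · exact absurd hk (lt_irrefl _)
    · exact ⟨i, by omega, rfl⟩
  · rintro ⟨i, hi, rfl⟩
    exact ⟨i + 1, by omega, rfl⟩

variable {n R : Type*} [Fintype n] [DecidableEq n] [CommSemiring R]

def slotWeight (g : n → R) (σ : ℕ → ℕ) (m k : ℕ) : n → R :=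
  if k ∈ (range (m + 1)).image σ then g else 1

theorem weightedPathSum_slotWeight (M : Matrix n n R) (g : n → R) {σ : ℕ → ℕ}
    (hσ : StrictMono σ) (m : ℕ) :
    weightedPathSum M (fun k => slotWeight g σ m (k + σ 0)) (σ m - σ 0)
      = gapVec M g (gaps σ m) := by
  induction m generalizing σ with
  | zero => simp [weightedPathSum, slotWeight, gaps, gapVec]
  | succ m ih =>
    set σ' : ℕ → ℕ := fun i => σ (i + 1)
    have hσ' : StrictMono σ' := fun i j hij => hσ (by omega)
    have h01 : σ 0 < σ 1 := hσ Nat.zero_lt_one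
    have h1m : σ 1 ≤ σ (m + 1) := hσ.monotone (by omega)
    have hshift : ∀ k, σ 0 < k → slotWeight g σ (m + 1) k = slotWeight g σ' m k := fun k hk => by
      simp only [slotWeight, mem_image_range_succ_iff σ m hk]; rfl
    rw [show σ (m + 1) - σ 0 = (σ 1 - σ 0) + (σ (m + 1) - σ 1) by omega,
      weightedPathSum_add_of_pos M (by omega), gaps, gapVec, ← ih hσ']
    · have hweights : (fun k => slotWeight g σ (m + 1) (k + (σ 1 - σ 0) + σ 0))
          = fun k => slotWeight g σ' m (k + σ' 0) := funext fun k => by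
        rw [hshift _ (by omega), show k + (σ 1 - σ 0) + σ 0 = k + σ' 0 by simp [σ']; omega]
      rw [zero_add, slotWeight, if_pos (mem_image_of_mem σ (by simp)), hweights]
    · intro k hk0 hka
      rw [hshift _ (by omega), slotWeight, if_neg]
      simp only [mem_image, not_exists, not_and]
      intro i _ hi
      have : σ 1 ≤ σ' i := hσ.monotone (by omega)
      omega

section Integral

variable {Ω α : Type*} [MeasurableSpace Ω] {μ : Measure Ω} {X : ℕ → Ω → α} {π : α → ℝ}
  {M : Matrix α α ℝ}

theorem measureReal_fin_cylinder
    (hpath : ∀ (T : ℕ) (f : ℕ → α),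
      μ.real {ω | ∀ i ≤ T, X i ω = f i} = π (f 0) * ∏ i ∈ range T, M (f i) (f (i + 1)))
    (T : ℕ) (y : Fin (T + 1) → α) :
    μ.real {ω | ∀ i : Fin (T + 1), X i ω = y i}
      = π (y 0) * ∏ k : Fin T, M (y k.castSucc) (y k.succ) := by
  have hclamp : ∀ i (hi : i ≤ T), Fin.clamp i T = ⟨i, Nat.lt_succ_of_le hi⟩ := fun i hi =>
    Fin.ext (min_eq_left hi)
  have hcyl : {ω | ∀ i : Fin (T + 1), X i ω = y i}
      = {ω | ∀ i ≤ T, X i ω = y (Fin.clamp i T)} := by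
    ext ω
    refine ⟨fun h i hi => by rw [hclamp i hi]; exact h ⟨i, _⟩, fun h i => ?_⟩
    simpa [hclamp i (Nat.le_of_lt_succ i.isLt)] using h i (Nat.le_of_lt_succ i.isLt)
  rw [hcyl, hpath, hclamp 0 (Nat.zero_le T), ← Fin.prod_univ_eq_prod_range]
  congr 1
  refine Finset.prod_congr rfl fun k _ => ?_
  rw [hclamp k k.isLt.le, hclamp (k + 1) k.isLt]
  rfl

variable [MeasurableSpace α] [MeasurableSingletonClass α] [Fintype α] [IsFiniteMeasure μ]

theorem integral_prod_eq_dotProduct_weightedPathSum (hX : ∀ k, Measurable (X k))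
    (hpath : ∀ (T : ℕ) (f : ℕ → α),
      μ.real {ω | ∀ i ≤ T, X i ω = f i} = π (f 0) * ∏ i ∈ range T, M (f i) (f (i + 1)))
    (h : ℕ → α → ℝ) (T : ℕ) :
    ∫ ω, ∏ k ∈ range (T + 1), h k (X k ω) ∂μ = π ⬝ᵥ weightedPathSum M h T := by
  set Y : Ω → Fin (T + 1) → α := fun ω i => X i ω
  have hY : Measurable Y := measurable_pi_lambda _ fun i => hX i
  have hcyl : ∀ y, Y ⁻¹' {y} = {ω | ∀ i : Fin (T + 1), X i ω = y i} := fun y => by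
    ext ω; simp [Y, funext_iff]
  calc ∫ ω, ∏ k ∈ range (T + 1), h k (X k ω) ∂μ
      = ∫ y, ∏ k : Fin (T + 1), h k (y k) ∂(μ.map Y) := by
        rw [integral_map hY.aemeasurable Integrable.of_finite.aestronglyMeasurable]
        exact integral_congr_ae (.of_forall fun ω =>
          (Fin.prod_univ_eq_prod_range (fun k => h k (X k ω)) (T + 1)).symm)
    _ = ∑ y : Fin (T + 1) → α, π (y 0) * (∏ k : Fin T, M (y k.castSucc) (y k.succ)) *
          ∏ k : Fin (T + 1), h k (y k) := by
        rw [integral_fintype Integrable.of_finite]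
        refine Finset.sum_congr rfl fun y _ => ?_
        rw [map_measureReal_apply hY (measurableSet_singleton y), hcyl,
          measureReal_fin_cylinder hpath, smul_eq_mul]
    _ = π ⬝ᵥ weightedPathSum M h T := sum_paths_eq_dotProduct_weightedPathSum M T π h

variable [DecidableEq α]

theorem integral_prod_slots_eq (hX : ∀ k, Measurable (X k))
    (hpath : ∀ (T : ℕ) (f : ℕ → α),
      μ.real {ω | ∀ i ≤ T, X i ω = f i} = π (f 0) * ∏ i ∈ range T, M (f i) (f (i + 1)))
    (hπ : π ᵥ* M = π) (g : α → ℝ) {τ : ℕ → ℕ} (hτ : StrictMono τ) (m : ℕ) :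
    ∫ ω, ∏ i ∈ range (m + 1), g (X (τ i) ω) ∂μ = π ⬝ᵥ gapVec M g (gaps τ m) := by
  have hπpow : ∀ a : ℕ, π ᵥ* M ^ a = π := fun a => by
    induction a with
    | zero => simp
    | succ a ih => rw [pow_succ, ← vecMul_vecMul, ih, hπ]
  have hslots : (range (m + 1)).image τ ⊆ range (τ m + 1) := fun k hk => by
    obtain ⟨i, hi, rfl⟩ := mem_image.1 hk
    exact mem_range.2 (Nat.lt_succ_of_le (hτ.monotone (Nat.le_of_lt_succ (mem_range.1 hi))))
  have hprod : ∀ ω, ∏ i ∈ range (m + 1), g (X (τ i) ω)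
      = ∏ k ∈ range (τ m + 1), slotWeight g τ m k (X k ω) := fun ω => by
    rw [← prod_image (f := fun k => g (X k ω)) fun i _ j _ h => hτ.injective h,
      ← inter_eq_right.2 hslots, ← prod_ite_mem]
    exact Finset.prod_congr rfl fun k _ => by simp only [slotWeight]; split_ifs <;> rfl
  have hfirst : ∀ k < τ 0, slotWeight g τ m k = 1 := fun k hk => by
    rw [slotWeight, if_neg]
    simp only [mem_image, not_exists, not_and]
    intro i _ hi
    have := hτ.monotone (Nat.zero_le i)
    omega
  have hτm : τ m = τ 0 + (τ m - τ 0) := (Nat.add_sub_cancel' (hτ.monotone (Nat.zero_le m))).symm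
  rw [integral_congr_ae (.of_forall hprod), integral_prod_eq_dotProduct_weightedPathSum hX hpath,
    hτm, weightedPathSum_add_of_eq_one M _ _ _ hfirst, dotProduct_mulVec, hπpow,
    weightedPathSum_slotWeight M g hτ m]

end Integral

def twoStateLaw (p : ℝ) : Bool → ℝ := fun b => if b then p else 1 - p

/-- `Π + x • (1 - Π)`, where `Π` has every row equal to `twoStateLaw p`. The chain with
`P(0 → 1) = p₀₁`, `P(1 → 0) = p₁₀` is `twoStateKernel (p₀₁ / (p₀₁ + p₁₀)) (1 - p₀₁ - p₁₀)`. -/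
def twoStateKernel (p x : ℝ) : Matrix Bool Bool ℝ :=
  Matrix.of fun i j => twoStateLaw p j + x * ((if i = j then 1 else 0) - twoStateLaw p j)

def onWeight (d : ℝ) : Bool → ℝ := fun b => if b then d else 1

/-- `w / twoStateLaw p` (for a row vector) or `v` (for a column vector) is nonnegative and
increases from `false` to `true` by `d - 1` times a nonnegative amount; at `d = 1` this forces it
to be constant, which a mere sign condition would not. -/
def IsTiltedRow (p d : ℝ) (w : Bool → ℝ) : Prop :=
  0 ≤ w ∧ ∃ e, 0 ≤ e ∧ (1 - p) * w true - p * w false = (d - 1) * e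

def IsTiltedCol (d : ℝ) (v : Bool → ℝ) : Prop :=
  0 ≤ v ∧ ∃ c, 0 ≤ c ∧ v true - v false = (d - 1) * c

theorem twoStateKernel_one (p : ℝ) : twoStateKernel p 1 = 1 := by
  ext i j; cases i <;> cases j <;> simp [twoStateKernel, twoStateLaw]

theorem twoStateKernel_mul (p x y : ℝ) :
    twoStateKernel p x * twoStateKernel p y = twoStateKernel p (x * y) := by
  ext i j; cases i <;> cases j <;> simp [twoStateKernel, twoStateLaw, mul_apply] <;> ring

theorem twoStateKernel_pow (p x : ℝ) (k : ℕ) :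
    twoStateKernel p x ^ k = twoStateKernel p (x ^ k) := by
  induction k with
  | zero => rw [pow_zero, pow_zero, twoStateKernel_one]
  | succ k ih => rw [pow_succ, ih, twoStateKernel_mul, pow_succ]

section TwoState

variable {p d l x y : ℝ}

theorem twoStateLaw_vecMul_twoStateKernel (p x : ℝ) :
    twoStateLaw p ᵥ* twoStateKernel p x = twoStateLaw p := by
  ext j; cases j <;> simp [twoStateKernel, twoStateLaw, vecMul, dotProduct] <;> ring

theorem twoStateKernel_nonneg (hp0 : 0 ≤ p) (hp1 : p ≤ 1) (hx0 : 0 ≤ x) (hx1 : x ≤ 1)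
    (i j : Bool) : 0 ≤ twoStateKernel p x i j := by
  cases i <;> cases j <;> simp [twoStateKernel, twoStateLaw] <;> nlinarith

theorem IsTiltedCol.onWeight_mul_mulVec (hp0 : 0 ≤ p) (hp1 : p ≤ 1) (hx0 : 0 ≤ x)
    (hx1 : x ≤ 1) (hd : 0 ≤ d) {v : Bool → ℝ} (hv : IsTiltedCol d v) :
    IsTiltedCol d (onWeight d * (twoStateKernel p x *ᵥ v)) := by
  obtain ⟨hv0, c, hc0, hc⟩ := hv
  have hKv : 0 ≤ twoStateKernel p x *ᵥ v := fun i =>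
    dotProduct_nonneg_of_nonneg (twoStateKernel_nonneg hp0 hp1 hx0 hx1 i) hv0
  refine ⟨fun i => mul_nonneg (by cases i <;> simp [onWeight, hd]) (hKv i),
    (twoStateKernel p x *ᵥ v) true + x * c, add_nonneg (hKv true) (mul_nonneg hx0 hc0), ?_⟩
  have hdiff : (twoStateKernel p x *ᵥ v) true - (twoStateKernel p x *ᵥ v) false
      = x * (v true - v false) := by
    simp [twoStateKernel, twoStateLaw, mulVec, dotProduct]; ring
  simp only [Pi.mul_apply, onWeight, if_true, Bool.false_eq_true, if_false]
  linear_combination hdiff + x * hc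

theorem IsTiltedRow.vecMul_mul_onWeight (hp0 : 0 ≤ p) (hp1 : p ≤ 1) (hx0 : 0 ≤ x)
    (hx1 : x ≤ 1) (hd : 0 ≤ d) {w : Bool → ℝ} (hw : IsTiltedRow p d w) :
    IsTiltedRow p d ((w ᵥ* twoStateKernel p x) * onWeight d) := by
  obtain ⟨hw0, e, he0, he⟩ := hw
  have hwK : 0 ≤ w ᵥ* twoStateKernel p x := fun j =>
    dotProduct_nonneg_of_nonneg hw0 fun i => twoStateKernel_nonneg hp0 hp1 hx0 hx1 i j
  refine ⟨fun i => mul_nonneg (hwK i) (by cases i <;> simp [onWeight, hd]),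
    (1 - p) * (w ᵥ* twoStateKernel p x) true + x * e,
    add_nonneg (mul_nonneg (by linarith) (hwK true)) (mul_nonneg hx0 he0), ?_⟩
  have htilt : (1 - p) * (w ᵥ* twoStateKernel p x) true - p * (w ᵥ* twoStateKernel p x) false
      = x * ((1 - p) * w true - p * w false) := by
    simp [twoStateKernel, twoStateLaw, vecMul, dotProduct]; ring
  simp only [Pi.mul_apply, onWeight, if_true, Bool.false_eq_true, if_false]
  linear_combination htilt + x * he

theorem isTiltedRow_twoStateLaw_mul_onWeight (hp0 : 0 ≤ p) (hp1 : p ≤ 1) (hd : 0 ≤ d) :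
    IsTiltedRow p d (twoStateLaw p * onWeight d) := by
  refine ⟨fun i => ?_, p * (1 - p), mul_nonneg hp0 (by linarith), ?_⟩
  · cases i <;> simp [twoStateLaw, onWeight] <;> nlinarith
  · simp [twoStateLaw, onWeight]; ring

theorem dotProduct_twoStateKernel_mulVec_mono {w v : Bool → ℝ} (hw : IsTiltedRow p d w)
    (hv : IsTiltedCol d v) (hxy : x ≤ y) :
    w ⬝ᵥ (twoStateKernel p x *ᵥ v) ≤ w ⬝ᵥ (twoStateKernel p y *ᵥ v) := by
  obtain ⟨-, e, he0, he⟩ := hw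
  obtain ⟨-, c, hc0, hc⟩ := hv
  have hcov : w ⬝ᵥ (twoStateKernel p y *ᵥ v) - w ⬝ᵥ (twoStateKernel p x *ᵥ v)
      = (y - x) * ((v true - v false) * ((1 - p) * w true - p * w false)) := by
    simp [twoStateKernel, twoStateLaw, mulVec, dotProduct]; ring
  rw [he, hc] at hcov
  nlinarith [mul_nonneg (mul_nonneg (sub_nonneg.2 hxy) (sq_nonneg (d - 1))) (mul_nonneg hc0 he0)]

theorem isTiltedCol_gapVec (hp0 : 0 ≤ p) (hp1 : p ≤ 1) (hl0 : 0 ≤ l) (hl1 : l ≤ 1) (hd : 0 ≤ d) :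
    ∀ L : List ℕ, IsTiltedCol d (gapVec (twoStateKernel p l) (onWeight d) L)
  | [] => ⟨fun i => by cases i <;> simp [gapVec, onWeight, hd], 1, zero_le_one,
      by simp [gapVec, onWeight]⟩
  | a :: L => by
    rw [gapVec, twoStateKernel_pow]
    exact (isTiltedCol_gapVec hp0 hp1 hl0 hl1 hd L).onWeight_mul_mulVec hp0 hp1
      (pow_nonneg hl0 a) (pow_le_one₀ hl0 hl1) hd

theorem dotProduct_gapVec_le_replicate (hp0 : 0 ≤ p) (hp1 : p ≤ 1) (hl0 : 0 ≤ l) (hl1 : l ≤ 1)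
    (hd : 0 ≤ d) (L : List ℕ) (hL : ∀ a ∈ L, 1 ≤ a) (w : Bool → ℝ)
    (hw : IsTiltedRow p d (w * onWeight d)) :
    w ⬝ᵥ gapVec (twoStateKernel p l) (onWeight d) L
      ≤ w ⬝ᵥ gapVec (twoStateKernel p l) (onWeight d) (List.replicate L.length 1) := by
  induction L generalizing w with
  | nil => rfl
  | cons a L ih =>
    set v := gapVec (twoStateKernel p l) (onWeight d) L
    set w' := (w * onWeight d) ᵥ* twoStateKernel p l
    have hw' : IsTiltedRow p d (w' * onWeight d) := hw.vecMul_mul_onWeight hp0 hp1 hl0 hl1 hd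
    calc w ⬝ᵥ gapVec (twoStateKernel p l) (onWeight d) (a :: L)
        = (w * onWeight d) ⬝ᵥ (twoStateKernel p (l ^ a) *ᵥ v) := by
          rw [dotProduct_gapVec_cons, twoStateKernel_pow]
      _ ≤ (w * onWeight d) ⬝ᵥ (twoStateKernel p l *ᵥ v) :=
          dotProduct_twoStateKernel_mulVec_mono hw (isTiltedCol_gapVec hp0 hp1 hl0 hl1 hd L)
            (pow_le_of_le_one hl0 hl1 (by have := hL a (by simp); omega))
      _ = w' ⬝ᵥ v := dotProduct_mulVec _ _ _
      _ ≤ w' ⬝ᵥ gapVec (twoStateKernel p l) (onWeight d) (List.replicate L.length 1) :=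
          ih (fun b hb => hL b (by simp [hb])) w' hw'
      _ = w ⬝ᵥ gapVec (twoStateKernel p l) (onWeight d) (List.replicate (a :: L).length 1) := by
          rw [List.length_cons, List.replicate_succ, dotProduct_gapVec_cons, pow_one,
            dotProduct_mulVec]

end TwoState

theorem exp_mul_sum_ite_eq_prod_onWeight {ι : Type*} (c : ℝ) (s : Finset ι) (b : ι → Bool) :
    Real.exp (c * ∑ i ∈ s, if b i then (1 : ℝ) else 0) = ∏ i ∈ s, onWeight (Real.exp c) (b i) := by
  rw [Finset.mul_sum, Real.exp_sum]
  exact Finset.prod_congr rfl fun i _ => by cases b i <;> simp [onWeight]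

end MarkovChain

open MarkovChain in
theorem mmoo_mgf_gap_monotone_general {Ω : Type*} [MeasurableSpace Ω]
    (μ : Measure Ω) [IsProbabilityMeasure μ]
    (X : ℕ → Ω → Bool) (hmeas : ∀ k, Measurable (X k))
    (p01 p10 : ℝ) (h01 : 0 < p01) (h10 : 0 < p10) (hsum : p01 + p10 < 1)
    (p : ℝ) (hp : p = p01 / (p01 + p10))
    (trans : Bool → Bool → ℝ)
    (htrans : trans = fun i j =>
      if i then (if j then 1 - p10 else p10) else (if j then p01 else 1 - p01))
    (hpath : ∀ (n : ℕ) (f : ℕ → Bool),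
      (μ {ω | ∀ i ≤ n, X i ω = f i}).toReal
        = (if f 0 then p else 1 - p) * ∏ i ∈ Finset.range n, trans (f i) (f (i + 1)))
    (P : ℝ) (θ : ℝ) :
    ∀ (n : ℕ) (τ : ℕ → ℕ), StrictMono τ →
      (∫ ω, Real.exp (θ * (P * ∑ i ∈ Finset.range n, (if X (τ i) ω then (1 : ℝ) else 0))) ∂μ)
        ≤ ∫ ω, Real.exp (θ * (P * ∑ k ∈ Finset.range n, (if X k ω then (1 : ℝ) else 0))) ∂μ := by
  intro n τ hτ
  rcases n with _ | m
  · simp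
  have hs : 0 < p01 + p10 := by linarith
  have hp0 : 0 ≤ p := hp ▸ by positivity
  have hp1 : p ≤ 1 := by rw [hp, div_le_one hs]; linarith
  have hkernel : trans = twoStateKernel p (1 - (p01 + p10)) := by
    ext i j
    cases i <;> cases j <;> simp [htrans, twoStateKernel, twoStateLaw, hp] <;> field_simp <;> ring
  have hchain : ∀ (N : ℕ) (f : ℕ → Bool), μ.real {ω | ∀ i ≤ N, X i ω = f i}
      = twoStateLaw p (f 0) * ∏ i ∈ range N, twoStateKernel p (1 - (p01 + p10)) (f i) (f (i + 1)) :=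
    fun N f => by rw [measureReal_def, hpath, hkernel]; rfl
  simp only [← mul_assoc θ P, exp_mul_sum_ite_eq_prod_onWeight]
  rw [integral_prod_slots_eq hmeas hchain (twoStateLaw_vecMul_twoStateKernel _ _) _ hτ,
    integral_prod_slots_eq (τ := fun k => k) hmeas hchain (twoStateLaw_vecMul_twoStateKernel _ _) _
      strictMono_id, gaps_id]
  have hd : 0 ≤ Real.exp (θ * P) := (Real.exp_pos _).le
  simpa only [length_gaps] using dotProduct_gapVec_le_replicate hp0 hp1 (by linarith)
    (by linarith) hd _ (fun a ha => one_le_of_mem_gaps hτ ha) _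
    (isTiltedRow_twoStateLaw_mul_onWeight hp0 hp1 hd)

/-- gap monotonicity of the MMOO moment-generating function: for any θ and
any strictly increasing time slots τ_0 < τ_1 < …, E[e^{θP Σ_{i<n} X_{τ_i}}] ≤ E[e^{θ S(0,n)}],
i.e. the MGF over n time slots is maximized when the slots are consecutive. -/
theorem mmoo_mgf_gap_monotone {Ω : Type*} [MeasurableSpace Ω]
    (μ : Measure Ω) [IsProbabilityMeasure μ]
    (X : ℕ → Ω → Bool) (hmeas : ∀ k, Measurable (X k))
    (p01 p10 : ℝ) (h01 : 0 < p01) (h10 : 0 < p10) (hsum : p01 + p10 < 1)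
    (p : ℝ) (hp : p = p01 / (p01 + p10))
    (trans : Bool → Bool → ℝ)
    (htrans : trans = fun i j =>
      if i then (if j then 1 - p10 else p10) else (if j then p01 else 1 - p01))
    (hpath : ∀ (n : ℕ) (f : ℕ → Bool),
      (μ {ω | ∀ i ≤ n, X i ω = f i}).toReal
        = (if f 0 then p else 1 - p) * ∏ i ∈ Finset.range n, trans (f i) (f (i + 1)))
    (P : ℝ) (hP : 0 < P) (θ : ℝ) :
    ∀ (n : ℕ) (τ : ℕ → ℕ), StrictMono τ →
      (∫ ω, Real.exp (θ * (P * ∑ i ∈ Finset.range n, (if X (τ i) ω then (1 : ℝ) else 0))) ∂μ)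
        ≤ ∫ ω, Real.exp (θ * (P * ∑ k ∈ Finset.range n, (if X k ω then (1 : ℝ) else 0))) ∂μ :=
  mmoo_mgf_gap_monotone_general μ X hmeas p01 p10 h01 h10 hsum p hp trans htrans hpath P θ
end

section
/- Spectral bounds for the MMOO MGF: Let S(0,t) = P Σ_{k=0}^{t-1} X_k for a stationary two-state Markov chain with transition matrix Π = [[p_{00}, p_{01}],[p_{10}, p_{11}]], p_{01}+p_{10} < 1, and let L(θ) = Π · diag(1, e^{θP}). Let m_+(θ) ≥ m_−(θ) be the eigenvalues of L(θ), and M_c(θ) = (1−p) + p e^{θP} with p = p_{01}/(p_{01}+p_{10}). Then M_S(θ,0,t) := E[e^{θ S(0,t)}] satisfies M_S(θ,0,t) = K(θ) m_+(θ)^t + (1−K(θ)) m_−(θ)^t with K(θ) = (M_c(θ) − m_−(θ))/(m_+(θ) − m_−(θ)) ∈ (0,1), and hence M_c(θ)^t ≤ M_S(θ,0,t) ≤ m_+(θ)^t and M_S(θ,0,t) ≥ K(θ) m_+(θ)^t for all t ≥ 0. -/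
/-!
By Cayley–Hamilton, `L² = (m₊ + m₋) L − m₊ m₋ I`, so `t ↦ M_S(θ,0,t)` satisfies the linear
recurrence with characteristic roots `m₊, m₋` and is a combination `c m₊^t + d m₋^t`. The
coefficients are pinned down by `M_S(0) = 1` and `M_S(1) = M_c`, the latter because `(1 − p, p)`
is the stationary distribution of `Π`; this gives `c = K`, `d = 1 − K` and
`M_c = K m₊ + (1 − K) m₋`. As `det L = (1 − p₀₁ − p₁₀) e^{θP} > 0`, both eigenvalues are positive,
and the bounds follow from convexity and monotonicity of `x ↦ x^t` on `[0, ∞)`.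
-/

open Matrix

theorem eq_mul_pow_add_mul_pow_of_recurrence {R : Type*} [CommRing R] {u : ℕ → R}
    {a b c d : R} (h0 : u 0 = c + d) (h1 : u 1 = c * a + d * b)
    (hrec : ∀ t, u (t + 2) = (a + b) * u (t + 1) - a * b * u t) (t : ℕ) :
    u t = c * a ^ t + d * b ^ t := by
  induction t using Nat.twoStepInduction with
  | zero => simp [h0]
  | one => simp [h1]
  | more t ih ih' => rw [hrec, ih, ih']; ring

namespace Matrix

variable {R : Type*} [CommRing R]

theorem fin_two_sq_eq_trace_smul_sub_det_smul (M : Matrix (Fin 2) (Fin 2) R) :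
    M ^ 2 = M.trace • M - M.det • 1 := by
  ext i j
  fin_cases i <;> fin_cases j <;> simp [sq, mul_apply, trace_fin_two, det_fin_two] <;> ring

theorem dotProduct_pow_add_two_mulVec {n : Type*} [Fintype n] [DecidableEq n]
    (M : Matrix n n R) {s q : R} (hM : M ^ 2 = s • M - q • 1) (v w : n → R) (t : ℕ) :
    v ⬝ᵥ (M ^ (t + 2) *ᵥ w) = s * (v ⬝ᵥ (M ^ (t + 1) *ᵥ w)) - q * (v ⬝ᵥ (M ^ t *ᵥ w)) := by
  rw [pow_add, hM, mul_sub, Matrix.mul_smul, Matrix.mul_smul, mul_one, ← pow_succ, sub_mulVec,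
    smul_mulVec, smul_mulVec, dotProduct_sub, dotProduct_smul, dotProduct_smul, smul_eq_mul,
    smul_eq_mul]

theorem fin_two_dotProduct_pow_mulVec (M : Matrix (Fin 2) (Fin 2) R) (v w : Fin 2 → R)
    {a b c d : R} (htr : a + b = M.trace) (hdet : a * b = M.det)
    (h0 : v ⬝ᵥ w = c + d) (h1 : v ⬝ᵥ (M *ᵥ w) = c * a + d * b) (t : ℕ) :
    v ⬝ᵥ (M ^ t *ᵥ w) = c * a ^ t + d * b ^ t := by
  refine eq_mul_pow_add_mul_pow_of_recurrence (u := fun t ↦ v ⬝ᵥ (M ^ t *ᵥ w)) ?_ ?_ ?_ t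
  · simpa using h0
  · simpa using h1
  · intro t
    rw [htr, hdet]
    exact M.dotProduct_pow_add_two_mulVec M.fin_two_sq_eq_trace_smul_sub_det_smul v w t

end Matrix

theorem pow_le_mul_pow_add_one_sub_mul_pow {a b K : ℝ} (ha : 0 ≤ a) (hb : 0 ≤ b)
    (hK0 : 0 ≤ K) (hK1 : K ≤ 1) (t : ℕ) :
    (K * a + (1 - K) * b) ^ t ≤ K * a ^ t + (1 - K) * b ^ t := by
  simpa using (convexOn_pow t).2 (Set.mem_Ici.2 ha) (Set.mem_Ici.2 hb) hK0
    (sub_nonneg.2 hK1) (by ring)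

def transitionMatrix (p01 p10 : ℝ) : Matrix (Fin 2) (Fin 2) ℝ :=
  !![1 - p01, p01; p10, 1 - p10]

theorem transitionMatrix_mul_diagonal (p01 p10 z : ℝ) :
    transitionMatrix p01 p10 * diagonal ![1, z] =
      of ![![(1 - p01) * 1, p01 * z], ![p10 * 1, (1 - p10) * z]] := by
  ext i j
  fin_cases i <;> fin_cases j <;> simp [transitionMatrix]

theorem det_transitionMatrix (p01 p10 : ℝ) :
    (transitionMatrix p01 p10).det = 1 - p01 - p10 := by
  simp [transitionMatrix, det_fin_two]; ring

theorem det_transitionMatrix_mul_diagonal (p01 p10 z : ℝ) :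
    (transitionMatrix p01 p10 * diagonal ![1, z]).det = (1 - p01 - p10) * z := by
  simp [det_transitionMatrix]

theorem vecMul_transitionMatrix_stationary {p01 p10 : ℝ} (h : p01 + p10 ≠ 0) :
    ![1 - p01 / (p01 + p10), p01 / (p01 + p10)] ᵥ* transitionMatrix p01 p10 =
      ![1 - p01 / (p01 + p10), p01 / (p01 + p10)] := by
  ext i
  fin_cases i <;> simp [transitionMatrix, vecMul] <;> field_simp <;> ring

theorem dotProduct_stationary_transitionMatrix_mul_diagonal_mulVec_one {p01 p10 : ℝ}
    (h : p01 + p10 ≠ 0) (z : ℝ) :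
    ![1 - p01 / (p01 + p10), p01 / (p01 + p10)] ⬝ᵥ
        ((transitionMatrix p01 p10 * diagonal ![1, z]) *ᵥ ![1, 1]) =
      (1 - p01 / (p01 + p10)) + p01 / (p01 + p10) * z := by
  rw [← mulVec_mulVec, dotProduct_mulVec, vecMul_transitionMatrix_stationary h]
  simp

theorem mmoo_mgf_spectral_bounds_general (p01 p10 : ℝ) (h01 : 0 < p01) (h10 : 0 < p10)
    (hsum : p01 + p10 < 1) (P θ : ℝ)
    (p : ℝ) (hp : p = p01 / (p01 + p10))
    (L : Matrix (Fin 2) (Fin 2) ℝ)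
    (hL : L = Matrix.of ![![(1 - p01) * 1, p01 * Real.exp (θ * P)],
                          ![p10 * 1, (1 - p10) * Real.exp (θ * P)]])
    (Mc : ℝ) (hMc : Mc = (1 - p) + p * Real.exp (θ * P))
    (mp mm : ℝ)
    (htrace : mp + mm = Matrix.trace L) (hdet : mp * mm = Matrix.det L)
    (hgap : mm < Mc ∧ Mc < mp)
    (K : ℝ) (hK : K = (Mc - mm) / (mp - mm))
    (MS : ℕ → ℝ)
    (hMS : ∀ t : ℕ, MS t = dotProduct ![1 - p, p] ((L ^ t).mulVec ![1, 1])) :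
    ∀ t : ℕ,
      MS t = K * mp ^ t + (1 - K) * mm ^ t ∧
      (0 < K ∧ K < 1) ∧
      Mc ^ t ≤ MS t ∧ MS t ≤ mp ^ t ∧ K * mp ^ t ≤ MS t := by
  rw [← transitionMatrix_mul_diagonal] at hL
  obtain ⟨hmm_Mc, hMc_mp⟩ := hgap
  have hs : 0 < p01 + p10 := add_pos h01 h10
  have hp_pos : 0 < p := hp ▸ div_pos h01 hs
  have hp_lt : p < 1 := by rw [hp, div_lt_one hs]; linarith
  have hMc_pos : 0 < Mc := hMc ▸ add_pos (sub_pos.2 hp_lt) (mul_pos hp_pos (Real.exp_pos _))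
  have hdet_pos : 0 < L.det := by
    rw [hL, det_transitionMatrix_mul_diagonal]
    exact mul_pos (by linarith) (Real.exp_pos _)
  have hmm_pos : 0 < mm := pos_of_mul_pos_right (hdet ▸ hdet_pos) (hMc_pos.trans hMc_mp).le
  have hmm_le : mm ≤ mp := (hmm_Mc.trans hMc_mp).le
  have hK_mem : 0 < K ∧ K < 1 := by
    rw [hK, div_pos_iff_of_pos_right (by linarith), div_lt_one (by linarith)]
    constructor <;> linarith
  have hMc_eq : Mc = K * mp + (1 - K) * mm := by
    rw [hK]; field_simp [(sub_pos.2 (hmm_Mc.trans hMc_mp)).ne']; ring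
  have hMS_eq (t : ℕ) : MS t = K * mp ^ t + (1 - K) * mm ^ t := by
    rw [hMS]
    refine L.fin_two_dotProduct_pow_mulVec _ _ htrace hdet (by simp) ?_ t
    rw [← hMc_eq, hL, hMc, hp,
      dotProduct_stationary_transitionMatrix_mul_diagonal_mulVec_one hs.ne']
  intro t
  have hmm_pow : 0 ≤ (1 - K) * mm ^ t :=
    mul_nonneg (sub_nonneg.2 hK_mem.2.le) (pow_nonneg hmm_pos.le t)
  rw [hMS_eq t]
  refine ⟨rfl, hK_mem, ?_, ?_, le_add_of_nonneg_right hmm_pow⟩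
  · exact hMc_eq ▸ pow_le_mul_pow_add_one_sub_mul_pow (hmm_pos.trans_le hmm_le).le hmm_pos.le
      hK_mem.1.le hK_mem.2.le t
  · nlinarith [pow_le_pow_left₀ hmm_pos.le hmm_le t]

/-- spectral bounds for the MMOO MGF: with L(θ) = Π·diag(1, e^{θP}),
eigenvalues m_− ≤ m_+ satisfying m_+ > M_c(θ) > m_−, and
M_S(θ,0,t) = (1−p, p)·L(θ)^t·(1,1)^T, one has
M_S = K m_+^t + (1−K) m_−^t with K = (M_c − m_−)/(m_+ − m_−) ∈ (0,1),
hence M_c^t ≤ M_S ≤ m_+^t and M_S ≥ K m_+^t. -/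
theorem mmoo_mgf_spectral_bounds (p01 p10 : ℝ) (h01 : 0 < p01) (h10 : 0 < p10)
    (hsum : p01 + p10 < 1) (P θ : ℝ) (hP : 0 < P)
    (p : ℝ) (hp : p = p01 / (p01 + p10))
    (L : Matrix (Fin 2) (Fin 2) ℝ)
    (hL : L = Matrix.of ![![(1 - p01) * 1, p01 * Real.exp (θ * P)],
                          ![p10 * 1, (1 - p10) * Real.exp (θ * P)]])
    (Mc : ℝ) (hMc : Mc = (1 - p) + p * Real.exp (θ * P))
    (mp mm : ℝ) (hmm : mm ≤ mp)
    (htrace : mp + mm = Matrix.trace L) (hdet : mp * mm = Matrix.det L)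
    (hgap : mm < Mc ∧ Mc < mp)
    (K : ℝ) (hK : K = (Mc - mm) / (mp - mm))
    (MS : ℕ → ℝ)
    (hMS : ∀ t : ℕ, MS t = dotProduct ![1 - p, p] ((L ^ t).mulVec ![1, 1])) :
    ∀ t : ℕ,
      MS t = K * mp ^ t + (1 - K) * mm ^ t ∧
      (0 < K ∧ K < 1) ∧
      Mc ^ t ≤ MS t ∧ MS t ≤ mp ^ t ∧ K * mp ^ t ≤ MS t :=
  mmoo_mgf_spectral_bounds_general p01 p10 h01 h10 hsum P θ p hp L hL Mc hMc mp mm htrace hdet hgap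
    K hK MS hMS
end
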